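/- Let A be a C*-algebra admitting an AF presentation that has the Fermion property. Then the continuous dual Banach space of A is not separable. -/

import Mathlib

/-!
Statement 8.

A C*-algebra with an AF presentation having the Fermion property has a
non-separable continuous dual Banach space.
-/

/-- `S` is an AF presentation of the C*-algebra `A`: an increasing sequence of
finite-dimensional *-subalgebras whose union is dense. -/
def IsAFPresentation (A : Type*) [NonUnitalCStarAlgebra A]
    (S : ℕ → NonUnitalStarSubalgebra ℂ A) : Prop :=
  Monotone S ∧ (∀ k, FiniteDimensional ℂ (S k)) ∧ Dense (⋃ k, (S k : Set A))

/-- The presentation `S` has the Fermion property: there are indices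
`n 0 < n 1 < ⋯` and nonzero minimal central projections `p k` of `S (n k)` such
that for every minimal projection `e` of the corner `p k • S (n k) • p k`,
the projection `p (k+1) * e` is nonzero and is not a minimal projection of
`S (n (k+1))`. -/
def HasFermionProperty (A : Type*) [NonUnitalCStarAlgebra A]
    (S : ℕ → NonUnitalStarSubalgebra ℂ A) : Prop :=
  ∃ (n : ℕ → ℕ) (p : ℕ → A),
    StrictMono n ∧
    (∀ k, p k ∈ S (n k)) ∧
    (∀ k, p k * p k = p k ∧ star (p k) = p k) ∧
    (∀ k, p k ≠ 0) ∧
    -- `p k` is central in `S (n k)`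
    (∀ k, ∀ a ∈ S (n k), p k * a = a * p k) ∧
    -- `p k` is minimal among the central projections of `S (n k)`
    (∀ k, ∀ q ∈ S (n k), (q * q = q ∧ star q = q) → (∀ a ∈ S (n k), q * a = a * q) →
      q * p k = q → q ≠ 0 → q = p k) ∧
    -- every minimal projection `e` of the corner `p k * S (n k) * p k` meets the
    -- next summand with multiplicity at least two
    (∀ k, ∀ e ∈ S (n k), (e * e = e ∧ star e = e) → e ≠ 0 → e * p k = e →
      (∀ a ∈ S (n k), ∃ c : ℂ, e * a * e = c • e) →
      (p (k + 1) * e ≠ 0 ∧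
        ∃ q ∈ S (n (k + 1)), (q * q = q ∧ star q = q) ∧ q ≠ 0 ∧
          q * (p (k + 1) * e) = q ∧ (p (k + 1) * e) * q = q ∧ q ≠ p (k + 1) * e))


namespace FermionAux

open Polynomial Finset Filter

variable {A : Type*} [NonUnitalCStarAlgebra A]

/-- `npow' x i = x^(i+1)` in a non-unital algebra. -/
noncomputable def npow' (x : A) : ℕ → A
  | 0 => x
  | (i+1) => x * npow' x i

lemma real_smul (r : ℝ) (x : A) : (r : ℂ) • x = r • x := by
  rw [← smul_one_smul ℂ r x]; norm_num

lemma npow'_comm (x : A) (i : ℕ) : x * npow' x i = npow' x i * x := by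
  induction i with
  | zero => rfl
  | succ i ih => rw [npow', ih, ← mul_assoc, ← ih]

lemma npow'_star (x : A) (hx : star x = x) (i : ℕ) : star (npow' x i) = npow' x i := by
  induction i with
  | zero => exact hx
  | succ i ih => rw [npow', star_mul, ih, hx, ← npow'_comm]

lemma npow'_mem {B : NonUnitalStarSubalgebra ℂ A} {x : A} (hx : x ∈ B) (i : ℕ) :
    npow' x i ∈ B := by
  induction i with
  | zero => exact hx
  | succ i ih => exact mul_mem hx ih

lemma npow'_compress {x f : A} (hl : f * x = x) (hr : x * f = x) (i : ℕ) :
    npow' x i * f = npow' x i ∧ f * npow' x i = npow' x i := by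
  induction i with
  | zero => exact ⟨hr, hl⟩
  | succ i ih =>
      constructor
      · rw [npow', mul_assoc, ih.1]
      · rw [npow', ← mul_assoc, hl]

lemma cfcn_npow (x : A) (hx : IsSelfAdjoint x) (i : ℕ) :
    cfcₙ (fun t : ℝ => t^(i+1)) x = npow' x i := by
  induction i with
  | zero => simpa [npow'] using cfcₙ_id' ℝ x hx
  | succ i ih =>
      have h := cfcₙ_mul (fun t : ℝ => t) (fun t : ℝ => t^(i+1)) x
        (by fun_prop) (by simp) (by fun_prop) (by simp)
      rw [cfcₙ_id' ℝ x hx, ih] at h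
      rw [npow', ← h]
      apply cfcₙ_congr
      intro t _; simp; ring

/-- the polynomial-type function `∑ i < m, c i * t^(i+1)` -/
noncomputable def pfun (c : ℕ → ℝ) (m : ℕ) : ℝ → ℝ := fun t => ∑ i ∈ range m, c i * t^(i+1)

/-- the corresponding element `∑ i < m, c i • x^(i+1)` -/
noncomputable def psum (c : ℕ → ℝ) (m : ℕ) (x : A) : A := ∑ i ∈ range m, c i • npow' x i

lemma pfun_cont (c : ℕ → ℝ) (m : ℕ) : Continuous (pfun c m) := by
  unfold pfun; fun_prop

lemma pfun_zero (c : ℕ → ℝ) (m : ℕ) : pfun c m 0 = 0 := by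
  simp [pfun]

lemma cfcn_pfun (c : ℕ → ℝ) (m : ℕ) (x : A) (hx : IsSelfAdjoint x) :
    cfcₙ (pfun c m) x = psum c m x := by
  have h : cfcₙ (∑ i ∈ range m, fun t : ℝ => c i * t^(i+1)) x
      = ∑ i ∈ range m, cfcₙ (fun t : ℝ => c i * t^(i+1)) x :=
    cfcₙ_sum _ x (range m) (fun i _ => by fun_prop) (fun i _ => by simp)
  have h2 : ∀ i, cfcₙ (fun t : ℝ => c i * t^(i+1)) x = c i • npow' x i := by
    intro i
    rw [cfcₙ_const_mul (c i) (fun t : ℝ => t^(i+1)) x (by fun_prop) (by simp),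
      cfcn_npow x hx i]
  have h3 : pfun c m = ∑ i ∈ range m, fun t : ℝ => c i * t^(i+1) := by
    funext t; simp [pfun]
  rw [h3, h, psum]
  exact Finset.sum_congr rfl fun i _ => h2 i

lemma psum_mem {B : NonUnitalStarSubalgebra ℂ A} {x : A} (hx : x ∈ B) (c : ℕ → ℝ) (m : ℕ) :
    psum c m x ∈ B := by
  apply sum_mem
  intro i _
  rw [← real_smul]
  exact SMulMemClass.smul_mem _ (npow'_mem hx i)

lemma psum_compress {x f : A} (hl : f * x = x) (hr : x * f = x) (c : ℕ → ℝ) (m : ℕ) :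
    psum c m x * f = psum c m x ∧ f * psum c m x = psum c m x := by
  constructor
  · rw [psum, Finset.sum_mul]
    exact Finset.sum_congr rfl fun i _ => by
      rw [smul_mul_assoc, (npow'_compress hl hr i).1]
  · rw [psum, Finset.mul_sum]
    exact Finset.sum_congr rfl fun i _ => by
      rw [mul_smul_comm, (npow'_compress hl hr i).2]





/-- An element of a finite-dimensional subalgebra satisfies a real polynomial relation. -/
lemma exists_real_relation (B : NonUnitalStarSubalgebra ℂ A) [FiniteDimensional ℂ B]
    {x : A} (hxB : x ∈ B) (hxs : star x = x) :
    ∃ (c : ℕ → ℝ) (m i₀ : ℕ), i₀ < m ∧ c i₀ ≠ 0 ∧ psum c m x = 0 := by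
  classical
  set d := Module.finrank ℂ B with hd
  set v : Fin (d+1) → B := fun i => ⟨npow' x i, npow'_mem hxB i⟩ with hv
  have hnli : ¬ LinearIndependent ℂ v := by
    intro h
    have := h.fintype_card_le_finrank
    simp [hd] at this
  obtain ⟨g, hg0, i₀, hgi⟩ := Fintype.not_linearIndependent_iff.mp hnli
  have hA : ∑ i : Fin (d+1), g i • npow' x i = 0 := by
    have := congrArg (Subtype.val) hg0
    simpa [v] using this
  -- star the relation
  have hAstar : ∑ i : Fin (d+1), (starRingEnd ℂ) (g i) • npow' x i = 0 := by
    have := congrArg star hA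
    simpa [star_sum, star_smul, npow'_star x hxs] using this
  -- real and imaginary parts
  have hre : ∑ i : Fin (d+1), ((g i).re : ℂ) • npow' x i = 0 := by
    have h2 : ∑ i : Fin (d+1), ((g i + (starRingEnd ℂ) (g i))) • npow' x i = 0 := by
      simp only [add_smul, Finset.sum_add_distrib, hA, hAstar, add_zero]
    have h3 : ∀ z : ℂ, z + (starRingEnd ℂ) z = ((2 * z.re : ℝ) : ℂ) := by
      intro z; simp [Complex.ext_iff]; ring
    simp only [h3] at h2
    have h4 : ∑ i : Fin (d+1), ((2:ℂ) * ((g i).re : ℂ)) • npow' x i = 0 := by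
      convert h2 using 2 with i
      push_cast; ring_nf
    rw [← smul_zero (2:ℂ)⁻¹, ← h4, Finset.smul_sum]
    exact Finset.sum_congr rfl fun i _ => by rw [smul_smul]; ring_nf
  have him : ∑ i : Fin (d+1), ((g i).im : ℂ) • npow' x i = 0 := by
    have h2 : ∑ i : Fin (d+1), ((g i - (starRingEnd ℂ) (g i))) • npow' x i = 0 := by
      simp only [sub_smul, Finset.sum_sub_distrib, hA, hAstar, sub_zero]
    have h3 : ∀ z : ℂ, z - (starRingEnd ℂ) z = (2 * z.im : ℝ) * Complex.I := by
      intro z; simp [Complex.ext_iff]; ring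
    simp only [h3] at h2
    have h4 : ∑ i : Fin (d+1), ((2:ℂ) * Complex.I * ((g i).im : ℂ)) • npow' x i = 0 := by
      convert h2 using 2 with i
      push_cast; ring_nf
    rw [← smul_zero ((2:ℂ) * Complex.I)⁻¹, ← h4, Finset.smul_sum]
    refine Finset.sum_congr rfl fun i _ => by
      rw [smul_smul, inv_mul_cancel_left₀ (by simp [Complex.I_ne_zero] : (2:ℂ) * Complex.I ≠ 0)]
  -- choose the nonvanishing part
  have key : ∃ c : Fin (d+1) → ℝ, (∃ i, c i ≠ 0) ∧
      ∑ i : Fin (d+1), (c i : ℂ) • npow' x i = 0 := by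
    by_cases hcase : (g i₀).re ≠ 0
    · exact ⟨fun i => (g i).re, ⟨i₀, hcase⟩, hre⟩
    · push_neg at hcase
      refine ⟨fun i => (g i).im, ⟨i₀, ?_⟩, him⟩
      intro h
      exact hgi (Complex.ext hcase h)
  obtain ⟨c, ⟨i₁, hi₁⟩, hcsum⟩ := key
  refine ⟨fun i => if h : i < d + 1 then c ⟨i, h⟩ else 0, d + 1, i₁, i₁.2, by simp only [dif_pos i₁.2]; exact hi₁, ?_⟩
  rw [psum,
    ← Fin.sum_univ_eq_sum_range (fun i : ℕ => (if h : i < d + 1 then c ⟨i, h⟩ else 0) • npow' x i) (d+1)]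
  rw [← hcsum]
  refine Finset.sum_congr rfl fun i _ => ?_
  rw [dif_pos i.2, real_smul]


/-- Selfadjoint elements of finite-dimensional subalgebras have finite quasispectrum. -/
lemma quasispectrum_finite (B : NonUnitalStarSubalgebra ℂ A) [FiniteDimensional ℂ B]
    {x : A} (hxB : x ∈ B) (hxs : star x = x) :
    (quasispectrum ℝ x).Finite := by
  classical
  obtain ⟨c, m, i₀, hi₀m, hc, hpsum⟩ := exists_real_relation B hxB hxs
  set P : ℝ[X] := ∑ i ∈ range m, C (c i) * X^(i+1) with hP
  have hPne : P ≠ 0 := by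
    intro h
    have : P.coeff (i₀+1) = c i₀ := by
      rw [hP, Polynomial.finset_sum_coeff]
      rw [Finset.sum_eq_single i₀]
      · rw [Polynomial.C_mul_X_pow_eq_monomial, Polynomial.coeff_monomial, if_pos rfl]
      · intro b _ hb
        rw [Polynomial.C_mul_X_pow_eq_monomial, Polynomial.coeff_monomial,
          if_neg (by omega)]
      · intro hmem
        exact absurd (Finset.mem_range.mpr hi₀m) hmem
    rw [h] at this
    simp at this
    exact hc this.symm
  have hPeval : ∀ t, P.eval t = pfun c m t := by
    intro t
    rw [hP, Polynomial.eval_finset_sum, pfun]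
    exact Finset.sum_congr rfl fun i _ => by simp
  have hsa : IsSelfAdjoint x := hxs
  have hcfc : cfcₙ (pfun c m) x = cfcₙ (fun _ : ℝ => 0) x := by
    rw [cfcn_pfun c m x hsa, hpsum, cfcₙ_const_zero ℝ x]
  have heqon := eqOn_of_cfcₙ_eq_cfcₙ hcfc hsa
    ((pfun_cont c m).continuousOn) (pfun_zero c m) (by fun_prop) rfl
  refine Set.Finite.subset (Polynomial.finite_setOf_isRoot hPne) ?_
  intro t ht
  have := heqon ht
  simp only [Set.mem_setOf_eq, Polynomial.IsRoot, hPeval]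
  exact this

/-- If `x` is a selfadjoint, `f`-compressed, non-scalar element of a finite-dimensional
subalgebra `B`, then there is a proper nonzero subprojection of `f` in `B`. -/
lemma exists_proper_subproj (B : NonUnitalStarSubalgebra ℂ A) [FiniteDimensional ℂ B]
    {f x : A} (hfB : f ∈ B) (hxB : x ∈ B) (hxs : star x = x)
    (hl : f * x = x) (hr : x * f = x) (hns : ∀ c : ℂ, x ≠ c • f) :
    ∃ e ∈ B, e * e = e ∧ star e = e ∧ e ≠ 0 ∧ e * f = e ∧ f * e = e ∧ e ≠ f := by
  classical
  have hsa : IsSelfAdjoint x := hxs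
  have hx0 : x ≠ 0 := by
    intro h; exact hns 0 (by simp [h])
  have hfin : (quasispectrum ℝ x).Finite := quasispectrum_finite B hxB hxs
  have hlam : ∃ l ∈ quasispectrum ℝ x, l ≠ 0 := by
    by_contra h
    push_neg at h
    have hsub : quasispectrum ℝ x ⊆ {0} := fun t ht => Set.mem_singleton_iff.mpr (h t ht)
    exact hx0 (CFC.eq_zero_of_quasispectrum_eq_zero (R := ℝ) (a := x) hsub hsa)
  obtain ⟨l, hlσ, hl0⟩ := hlam
  set T : Finset ℝ := hfin.toFinset with hT
  set R : ℝ[X] := ∏ μ ∈ T.erase l, (X - C μ) with hR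
  have hRl : R.eval l ≠ 0 := by
    rw [hR, Polynomial.eval_prod]
    refine Finset.prod_ne_zero_iff.mpr fun μ hμ => ?_
    have hne : μ ≠ l := (Finset.mem_erase.mp hμ).1
    simp only [Polynomial.eval_sub, Polynomial.eval_X, Polynomial.eval_C]
    intro hcon
    exact hne (sub_eq_zero.mp hcon).symm
  set Q : ℝ[X] := C (R.eval l)⁻¹ * R with hQdef
  have hQl : Q.eval l = 1 := by
    rw [hQdef]; simp [inv_mul_cancel₀ hRl]
  have hQvan : ∀ μ ∈ quasispectrum ℝ x, μ ≠ l → Q.eval μ = 0 := by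
    intro μ hμ hne
    have hmem : μ ∈ T.erase l := Finset.mem_erase.mpr ⟨hne, hfin.mem_toFinset.mpr hμ⟩
    have hz : Polynomial.eval μ R = 0 := by
      rw [hR, Polynomial.eval_prod]
      exact Finset.prod_eq_zero hmem (by simp)
    rw [hQdef, Polynomial.eval_mul, hz, mul_zero]
  have h0σ : (0:ℝ) ∈ quasispectrum ℝ x := quasispectrum.zero_mem ℝ x
  have hQ0 : Q.eval 0 = 0 := hQvan 0 h0σ (Ne.symm hl0)
  set g : ℝ → ℝ := fun t => Q.eval t with hg
  have hgt : ∀ t, g t = Q.eval t := fun _ => rfl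
  have hgcont : Continuous g := by rw [hg]; exact Polynomial.continuous Q
  have hgzero : g 0 = 0 := hQ0
  -- g agrees with a pfun
  have hgp : g = pfun (fun i => Q.coeff (i+1)) Q.natDegree := by
    funext t
    rw [pfun, hgt t, Polynomial.eval_eq_sum_range, Finset.sum_range_succ']
    simp only [pow_zero, mul_one, ← Polynomial.coeff_zero_eq_eval_zero] at hQ0 ⊢
    rw [hQ0]
    simp
  set e : A := cfcₙ g x with he
  have hepsum : e = psum (fun i => Q.coeff (i+1)) Q.natDegree x := by
    rw [he, hgp, cfcn_pfun _ _ x hsa]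
  have heB : e ∈ B := hepsum ▸ psum_mem hxB _ _
  have heproj : e * e = e := by
    rw [he, ← cfcₙ_mul g g x hgcont.continuousOn hgzero hgcont.continuousOn hgzero]
    apply cfcₙ_congr
    intro μ hμ
    by_cases hμl : μ = l
    · simp only [hgt, hμl, hQl]; norm_num
    · simp only [hgt, hQvan μ hμ hμl]; norm_num
  have hestar : star e = e := by
    have : IsSelfAdjoint e := he ▸ cfcₙ_predicate g x
    exact this
  have hene : e ≠ 0 := by
    intro h
    have hmap : quasispectrum ℝ e = g '' quasispectrum ℝ x :=
      he ▸ cfcₙ_map_quasispectrum g x hgcont.continuousOn hgzero hsa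
    have h1 : (1:ℝ) ∈ quasispectrum ℝ e := by
      rw [hmap]
      exact ⟨l, hlσ, hQl⟩
    rw [h, CFC.quasispectrum_zero_eq] at h1
    simp at h1
  have hcompress := psum_compress hl hr (fun i => Q.coeff (i+1)) Q.natDegree
  have hef : e * f = e := by rw [hepsum]; exact hcompress.1
  have hfe : f * e = e := by rw [hepsum]; exact hcompress.2
  refine ⟨e, heB, heproj, hestar, hene, hef, hfe, ?_⟩
  intro hefeq
  -- if e = f then x = l • f, contradiction
  have hxe : x * e = x := by rw [hefeq]; exact hr
  have hmul : cfcₙ (fun t : ℝ => t * g t) x = x * e := by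
    rw [he, cfcₙ_mul (fun t : ℝ => t) g x (by fun_prop) rfl hgcont.continuousOn hgzero,
      cfcₙ_id' ℝ x hsa]
  have hideq : cfcₙ (fun t : ℝ => t * g t) x = cfcₙ (fun t : ℝ => t) x := by
    rw [hmul, hxe, cfcₙ_id' ℝ x hsa]
  have heqon := eqOn_of_cfcₙ_eq_cfcₙ hideq hsa
    (by exact (continuous_id.mul hgcont).continuousOn) (by simp [hgzero])
    (by fun_prop) rfl
  have hσ2 : ∀ μ ∈ quasispectrum ℝ x, μ = 0 ∨ μ = l := by
    intro μ hμ
    by_cases hμl : μ = l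
    · exact Or.inr hμl
    · left
      have h2 : μ * Q.eval μ = μ := heqon hμ
      rw [hQvan μ hμ hμl] at h2
      simpa using h2.symm
  have hxlf : x = l • e := by
    have : cfcₙ (fun t : ℝ => t) x = cfcₙ (fun t : ℝ => l * g t) x := by
      apply cfcₙ_congr
      intro μ hμ
      rcases hσ2 μ hμ with h0 | hμl
      · simp only [h0, hgt, hQ0, mul_zero]
      · simp only [hμl, hgt, hQl, mul_one]
    rw [cfcₙ_id' ℝ x hsa] at this
    rw [this, he, cfcₙ_const_mul l g x hgcont.continuousOn hgzero]
  rw [hefeq] at hxlf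
  exact hns (l : ℂ) (by rw [real_smul]; exact hxlf)




/-- From a non-scalar corner element, produce a selfadjoint non-scalar compressed element. -/
lemma corner_nonscalar (B : NonUnitalStarSubalgebra ℂ A) {f a₀ : A}
    (hfB : f ∈ B) (hff : f * f = f) (hfs : star f = f) (ha₀ : a₀ ∈ B)
    (hna : ∀ c : ℂ, f * a₀ * f ≠ c • f) :
    ∃ x ∈ B, star x = x ∧ f * x = x ∧ x * f = x ∧ ∀ c : ℂ, x ≠ c • f := by
  classical
  set y : A := f * a₀ * f with hy
  have hyB : y ∈ B := mul_mem (mul_mem hfB ha₀) hfB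
  have hfy : f * y = y := by rw [hy, ← mul_assoc, ← mul_assoc, hff]
  have hyf : y * f = y := by rw [hy, mul_assoc, mul_assoc, hff, ← mul_assoc]
  have hysB : star y ∈ B := star_mem hyB
  have hfys : f * star y = star y := by
    have h := congrArg star hyf
    rwa [star_mul, hfs] at h
  have hysf : star y * f = star y := by
    have h := congrArg star hfy
    rwa [star_mul, hfs] at h
  set u : A := y + star y with hu
  set w : A := Complex.I • (y - star y) with hw
  have hus : star u = u := by rw [hu]; simp [add_comm]
  have hws : star w = w := by
    rw [hw, star_smul, star_sub, star_star]
    simp only [Complex.star_def, Complex.conj_I]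
    module
  have huB : u ∈ B := add_mem hyB hysB
  have hwB : w ∈ B := SMulMemClass.smul_mem _ (sub_mem hyB hysB)
  have hfu : f * u = u := by rw [hu, mul_add, hfy, hfys]
  have huf : u * f = u := by rw [hu, add_mul, hyf, hysf]
  have hfw : f * w = w := by rw [hw, mul_smul_comm, mul_sub, hfy, hfys]
  have hwf : w * f = w := by rw [hw, smul_mul_assoc, sub_mul, hyf, hysf]
  by_cases hucase : ∀ c : ℂ, u ≠ c • f
  · exact ⟨u, huB, hus, hfu, huf, hucase⟩
  push_neg at hucase
  obtain ⟨c₁, hc₁⟩ := hucase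
  by_cases hwcase : ∀ c : ℂ, w ≠ c • f
  · exact ⟨w, hwB, hws, hfw, hwf, hwcase⟩
  push_neg at hwcase
  obtain ⟨c₂, hc₂⟩ := hwcase
  exfalso
  have h2y : (2 : ℂ) • y = u - Complex.I • w := by
    rw [hu, hw, smul_smul, Complex.I_mul_I]
    module
  have : y = ((2:ℂ)⁻¹ * (c₁ - Complex.I * c₂)) • f := by
    have : (2 : ℂ) • y = (c₁ - Complex.I * c₂) • f := by
      rw [h2y, hc₁, hc₂, smul_smul, ← sub_smul]
    calc y = (2:ℂ)⁻¹ • ((2:ℂ) • y) := by rw [smul_smul]; norm_num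
    _ = _ := by rw [this, smul_smul]
  exact hna _ this

/-- the corner submodule `f B f`. -/
noncomputable def crn (B : NonUnitalStarSubalgebra ℂ A) (f : A) : Submodule ℂ A :=
  Submodule.map ((LinearMap.mulLeft ℂ f).comp (LinearMap.mulRight ℂ f))
    B.toNonUnitalSubalgebra.toSubmodule

instance crn_finiteDimensional (B : NonUnitalStarSubalgebra ℂ A) [FiniteDimensional ℂ B]
    (f : A) : FiniteDimensional ℂ (crn B f) := by
  haveI : FiniteDimensional ℂ B.toNonUnitalSubalgebra.toSubmodule :=
    ‹FiniteDimensional ℂ B›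
  unfold crn
  infer_instance

lemma mem_crn {B : NonUnitalStarSubalgebra ℂ A} {f z : A} :
    z ∈ crn B f ↔ ∃ b ∈ B, f * b * f = z := by
  constructor
  · rintro ⟨b, hb, rfl⟩
    exact ⟨b, hb, by simp [LinearMap.mulLeft_apply, LinearMap.mulRight_apply, mul_assoc]⟩
  · rintro ⟨b, hb, rfl⟩
    exact ⟨b, hb, by simp [LinearMap.mulLeft_apply, LinearMap.mulRight_apply, mul_assoc]⟩

/-- Every nonzero projection in a finite-dimensional subalgebra dominates a minimal one. -/
lemma exists_minimal_proj (B : NonUnitalStarSubalgebra ℂ A) [FiniteDimensional ℂ B]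
    {f : A} (hfB : f ∈ B) (hff : f * f = f) (hfs : star f = f) (hf0 : f ≠ 0) :
    ∃ e ∈ B, e * e = e ∧ star e = e ∧ e ≠ 0 ∧ e * f = e ∧ f * e = e ∧
      ∀ a ∈ B, ∃ c : ℂ, e * a * e = c • e := by
  classical
  haveI hBsub : FiniteDimensional ℂ B.toNonUnitalSubalgebra.toSubmodule :=
    ‹FiniteDimensional ℂ B›
  have main : ∀ N : ℕ, ∀ f : A, f ∈ B → f * f = f → star f = f → f ≠ 0 →
      Module.finrank ℂ (crn B f) ≤ N →
      ∃ e ∈ B, e * e = e ∧ star e = e ∧ e ≠ 0 ∧ e * f = e ∧ f * e = e ∧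
        ∀ a ∈ B, ∃ c : ℂ, e * a * e = c • e := by
    intro N
    induction N with
    | zero =>
        intro f hfB hff hfs hf0 hrank
        exfalso
        have hfc : f ∈ crn B f := mem_crn.mpr ⟨f, hfB, by rw [hff, hff]⟩
        have : 0 < Module.finrank ℂ (crn B f) := by
          haveI : FiniteDimensional ℂ (crn B f) := inferInstance
          rw [Module.finrank_pos_iff_exists_ne_zero]
          exact ⟨⟨f, hfc⟩, by simpa using hf0⟩
        omega
    | succ N ih =>
        intro f hfB hff hfs hf0 hrank
        by_cases hmin : ∀ a ∈ B, ∃ c : ℂ, f * a * f = c • f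
        · exact ⟨f, hfB, hff, hfs, hf0, hff, hff, hmin⟩
        push_neg at hmin
        obtain ⟨a₀, ha₀B, hna⟩ := hmin
        obtain ⟨x, hxB, hxs, hfx, hxf, hxns⟩ := corner_nonscalar B hfB hff hfs ha₀B hna
        obtain ⟨e', he'B, he'p, he's, he'0, he'f, hfe', he'ne⟩ :=
          exists_proper_subproj B hfB hxB hxs hfx hxf hxns
        -- the corner of e' is strictly smaller
        have hle : crn B e' ≤ crn B f := by
          intro z hz
          obtain ⟨b, hbB, hbz⟩ := mem_crn.mp hz
          refine mem_crn.mpr ⟨e' * b * e', mul_mem (mul_mem he'B hbB) he'B, ?_⟩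
          rw [← hbz]
          calc f * (e' * b * e') * f = (f * e') * b * (e' * f) := by
                simp only [mul_assoc]
          _ = e' * b * e' := by rw [hfe', he'f]
        have hfnotin : f ∉ crn B e' := by
          intro hmem
          obtain ⟨b, hbB, hbz⟩ := mem_crn.mp hmem
          apply he'ne
          calc e' = e' * f := he'f.symm
          _ = e' * (e' * b * e') := by rw [hbz]
          _ = (e' * e') * b * e' := by simp only [mul_assoc]
          _ = f := by rw [he'p, hbz]
        have hlt : crn B e' < crn B f :=
          lt_of_le_of_ne hle (by
            intro h
            exact hfnotin (h ▸ mem_crn.mpr ⟨f, hfB, by rw [hff, hff]⟩))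
        have hrk : Module.finrank ℂ (crn B e') < Module.finrank ℂ (crn B f) :=
          Submodule.finrank_lt_finrank_of_lt hlt
        obtain ⟨e, heB, hep, hes, he0, hee', he'e, hemin⟩ :=
          ih e' he'B he'p he's he'0 (by omega)
        refine ⟨e, heB, hep, hes, he0, ?_, ?_, hemin⟩
        · calc e * f = (e * e') * f := by rw [hee']
          _ = e * (e' * f) := by rw [mul_assoc]
          _ = e := by rw [he'f, hee']
        · calc f * e = f * (e' * e) := by rw [he'e]
          _ = (f * e') * e := by rw [mul_assoc]
          _ = e := by rw [hfe', he'e]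
  exact main (Module.finrank ℂ (crn B f)) f hfB hff hfs hf0 le_rfl




structure FData (A : Type*) [NonUnitalCStarAlgebra A] where
  S : ℕ → NonUnitalStarSubalgebra ℂ A
  n : ℕ → ℕ
  p : ℕ → A
  mono : Monotone S
  fd : ∀ k, FiniteDimensional ℂ (S k)
  hn : StrictMono n
  hpmem : ∀ k, p k ∈ S (n k)
  hpp : ∀ k, p k * p k = p k
  hps : ∀ k, star (p k) = p k
  hpne : ∀ k, p k ≠ 0
  hcentral : ∀ k, ∀ a ∈ S (n k), p k * a = a * p k
  hferm : ∀ k, ∀ e ∈ S (n k), (e * e = e ∧ star e = e) → e ≠ 0 → e * p k = e →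
      (∀ a ∈ S (n k), ∃ c : ℂ, e * a * e = c • e) →
      (p (k + 1) * e ≠ 0 ∧
        ∃ q ∈ S (n (k + 1)), (q * q = q ∧ star q = q) ∧ q ≠ 0 ∧
          q * (p (k + 1) * e) = q ∧ (p (k + 1) * e) * q = q ∧ q ≠ p (k + 1) * e)

variable {D : FData A}

/-- The invariant carried along the construction. -/
def Inv (D : FData A) (k : ℕ) (f : A) : Prop :=
  f ∈ D.S (D.n k) ∧ f * f = f ∧ star f = f ∧ f ≠ 0 ∧ f * D.p k = f

/-- `t = (e, q, r)`: `e` is a minimal projection under `f`, `q`, `r` are the two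
orthogonal children under `p (k+1) * e`. -/
def StepProp (D : FData A) (k : ℕ) (f : A) (t : A × A × A) : Prop :=
  (t.1 ∈ D.S (D.n k) ∧ t.1 * t.1 = t.1 ∧ star t.1 = t.1 ∧ t.1 ≠ 0 ∧
    t.1 * f = t.1 ∧ f * t.1 = t.1 ∧
    ∀ a ∈ D.S (D.n k), ∃ c : ℂ, t.1 * a * t.1 = c • t.1) ∧
  Inv D (k+1) t.2.1 ∧ Inv D (k+1) t.2.2 ∧
  t.2.1 * t.2.2 = 0 ∧ t.2.2 * t.2.1 = 0 ∧
  t.2.1 * t.1 = t.2.1 ∧ t.1 * t.2.1 = t.2.1 ∧ t.2.2 * t.1 = t.2.2 ∧ t.1 * t.2.2 = t.2.2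

lemma step {k : ℕ} {f : A} (h : Inv D k f) : ∃ t : A × A × A, StepProp D k f t := by
  haveI := D.fd (D.n k)
  obtain ⟨hmem, hproj, hstar, hne, hpk⟩ := h
  obtain ⟨e, heS, hee, hes, he0, hef, hfe, hemin⟩ :=
    exists_minimal_proj (D.S (D.n k)) hmem hproj hstar hne
  have hepk : e * D.p k = e := by
    conv_lhs => rw [← hef, mul_assoc, hpk]
    exact hef
  obtain ⟨hpe0, q, hqS, ⟨hqq, hqs⟩, hq0, hq1, hq2, hqne⟩ :=
    D.hferm k e heS ⟨hee, hes⟩ he0 hepk hemin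
  set P := D.p (k+1) with hP
  have hSle : D.S (D.n k) ≤ D.S (D.n (k+1)) := D.mono (D.hn.monotone (Nat.le_succ k))
  have heS' : e ∈ D.S (D.n (k+1)) := hSle heS
  have hcomm : P * e = e * P := D.hcentral (k+1) e heS'
  have hPP : P * P = P := D.hpp (k+1)
  have hPs : star P = P := D.hps (k+1)
  have hpemem : P * e ∈ D.S (D.n (k+1)) := mul_mem (D.hpmem (k+1)) heS'
  have hpe_proj : (P * e) * (P * e) = P * e := by
    have h1 : (P * e) * (P * e) = P * (e * P) * e := by simp only [mul_assoc]
    have h2 : P * (P * e) * e = (P * P) * (e * e) := by simp only [mul_assoc]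
    rw [h1, ← hcomm, h2, hPP, hee]
  have hpe_star : star (P * e) = P * e := by rw [star_mul, hes, hPs, ← hcomm]
  have hpeP : (P * e) * P = P * e := by
    have h1 : (P * e) * P = P * (e * P) := by rw [mul_assoc]
    rw [h1, ← hcomm, ← mul_assoc, hPP]
  have hpee : (P * e) * e = P * e := by rw [mul_assoc, hee]
  have hepe : e * (P * e) = P * e := by rw [← mul_assoc, ← hcomm, mul_assoc, hee]
  have hqP : q * P = q := by
    calc q * P = (q * (P * e)) * P := by rw [hq1]
    _ = q * ((P * e) * P) := by rw [mul_assoc]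
    _ = q := by rw [hpeP, hq1]
  have hqe : q * e = q := by
    calc q * e = (q * (P * e)) * e := by rw [hq1]
    _ = q * ((P * e) * e) := by rw [mul_assoc]
    _ = q := by rw [hpee, hq1]
  have heq : e * q = q := by
    calc e * q = e * ((P * e) * q) := by rw [hq2]
    _ = (e * (P * e)) * q := by simp only [mul_assoc]
    _ = q := by rw [hepe, hq2]
  refine ⟨(e, q, P * e - q), ⟨heS, hee, hes, he0, hef, hfe, hemin⟩, ⟨hqS, hqq, hqs, hq0, hqP⟩,
    ?_, ?_, ?_, hqe, heq, ?_, ?_⟩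
  · -- Inv of r
    refine ⟨sub_mem hpemem hqS, ?_, ?_, ?_, ?_⟩
    · have : (P * e - q) * (P * e - q)
          = (P * e) * (P * e) - (P * e) * q - (q * (P * e) - q * q) := by
        rw [sub_mul, mul_sub, mul_sub]
      rw [this, hpe_proj, hq2, hq1, hqq, sub_self, sub_zero]
    · rw [star_sub, hpe_star, hqs]
    · exact sub_ne_zero.mpr (Ne.symm hqne)
    · rw [sub_mul, hpeP, hqP]
  · -- q * r = 0
    rw [mul_sub, hq1, hqq, sub_self]
  · -- r * q = 0
    rw [sub_mul, hq2, hqq, sub_self]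
  · -- r * e = r
    rw [sub_mul, hpee, hqe]
  · -- e * r = r
    rw [mul_sub, hepe, heq]

open Classical in
noncomputable def chooseEQR (D : FData A) (k : ℕ) (f : A) : A × A × A :=
  if h : Inv D k f then Classical.choose (step h) else (0, 0, 0)

lemma chooseEQR_spec {k : ℕ} {f : A} (h : Inv D k f) :
    StepProp D k f (chooseEQR D k f) := by
  rw [chooseEQR, dif_pos h]
  exact Classical.choose_spec (step h)

noncomputable def emin (D : FData A) (k : ℕ) (f : A) : A := (chooseEQR D k f).1

noncomputable def child (D : FData A) (k : ℕ) (f : A) (b : Bool) : A :=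
  if b then (chooseEQR D k f).2.2 else (chooseEQR D k f).2.1

/-- The branch of projections attached to `s : ℕ → Bool`. -/
noncomputable def fbr (D : FData A) (s : ℕ → Bool) : ℕ → A
  | 0 => D.p 0
  | (k+1) => child D k (fbr D s k) (s k)

lemma inv_fbr (D : FData A) (s : ℕ → Bool) : ∀ k, Inv D k (fbr D s k) := by
  intro k
  induction k with
  | zero => exact ⟨D.hpmem 0, D.hpp 0, D.hps 0, D.hpne 0, D.hpp 0⟩
  | succ k ih =>
      have hs := chooseEQR_spec ih
      show Inv D (k+1) (child D k (fbr D s k) (s k))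
      rw [child]
      cases (s k) with
      | false => simpa using hs.2.1
      | true => simpa using hs.2.2.1

lemma fbr_congr (D : FData A) {s t : ℕ → Bool} :
    ∀ k, (∀ j < k, s j = t j) → fbr D s k = fbr D t k := by
  intro k
  induction k with
  | zero => intro _; rfl
  | succ k ih =>
      intro h
      show child D k (fbr D s k) (s k) = child D k (fbr D t k) (t k)
      rw [ih (fun j hj => h j (Nat.lt_succ_of_lt hj)), h k (Nat.lt_succ_self k)]

lemma fbr_chain (D : FData A) (s : ℕ → Bool) :
    ∀ k j, j ≤ k → fbr D s k * fbr D s j = fbr D s k ∧ fbr D s j * fbr D s k = fbr D s k := by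
  intro k
  induction k with
  | zero =>
      intro j hj
      rw [Nat.le_zero.mp hj]
      exact ⟨(inv_fbr D s 0).2.1, (inv_fbr D s 0).2.1⟩
  | succ k ih =>
      intro j hj
      by_cases hjcase : j = k + 1
      case pos =>
        subst hjcase
        exact ⟨(inv_fbr D s (k+1)).2.1, (inv_fbr D s (k+1)).2.1⟩
      case neg =>
        have hle' : j ≤ k := by omega
        have hs := chooseEQR_spec (inv_fbr D s k)
        -- children compressed by e := emin
        set e := (chooseEQR D k (fbr D s k)).1 with he
        have hce : fbr D s (k+1) * e = fbr D s (k+1) ∧ e * fbr D s (k+1) = fbr D s (k+1) := by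
          have hfb : fbr D s (k+1) = child D k (fbr D s k) (s k) := rfl
          rw [hfb, child]
          cases (s k) with
          | false => simpa using ⟨hs.2.2.2.2.2.1, hs.2.2.2.2.2.2.1⟩
          | true => simpa using ⟨hs.2.2.2.2.2.2.2.1, hs.2.2.2.2.2.2.2.2⟩
        have hef : e * fbr D s k = e := hs.1.2.2.2.2.1
        have hfe : fbr D s k * e = e := hs.1.2.2.2.2.2.1
        have hej : e * fbr D s j = e := by
          calc e * fbr D s j = (e * fbr D s k) * fbr D s j := by rw [hef]
          _ = e * (fbr D s k * fbr D s j) := by rw [mul_assoc]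
          _ = e := by rw [(ih j hle').1, hef]
        have hje : fbr D s j * e = e := by
          calc fbr D s j * e = fbr D s j * (fbr D s k * e) := by rw [hfe]
          _ = (fbr D s j * fbr D s k) * e := by rw [mul_assoc]
          _ = e := by rw [(ih j hle').2, hfe]
        constructor
        · calc fbr D s (k+1) * fbr D s j = (fbr D s (k+1) * e) * fbr D s j := by rw [hce.1]
          _ = fbr D s (k+1) * (e * fbr D s j) := by rw [mul_assoc]
          _ = fbr D s (k+1) := by rw [hej, hce.1]
        · calc fbr D s j * fbr D s (k+1) = fbr D s j * (e * fbr D s (k+1)) := by rw [hce.2]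
          _ = (fbr D s j * e) * fbr D s (k+1) := by rw [mul_assoc]
          _ = fbr D s (k+1) := by rw [hje, hce.2]

lemma fbr_orth (D : FData A) {s t : ℕ → Bool} {d : ℕ}
    (hagree : ∀ i < d, s i = t i) (hd : s d ≠ t d) :
    ∀ k j, d < k → d < j → fbr D s k * fbr D t j = 0 := by
  have hpar : fbr D s d = fbr D t d := fbr_congr D d hagree
  have hsib : fbr D s (d+1) * fbr D t (d+1) = 0 := by
    have hs := chooseEQR_spec (inv_fbr D s d)
    show child D d (fbr D s d) (s d) * child D d (fbr D t d) (t d) = 0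
    rw [← hpar, child, child]
    cases hsd : (s d) with
    | false =>
        have htd : t d = true := by
          cases htd : (t d) <;> simp_all
        rw [htd]
        simpa using hs.2.2.2.1
    | true =>
        have htd : t d = false := by
          cases htd : (t d) <;> simp_all
        rw [htd]
        simpa using hs.2.2.2.2.1
  intro k j hk hj
  have h1 : fbr D s k * fbr D s (d+1) = fbr D s k := (fbr_chain D s k (d+1) hk).1
  have h2 : fbr D t (d+1) * fbr D t j = fbr D t j := (fbr_chain D t j (d+1) hj).2
  calc fbr D s k * fbr D t j = (fbr D s k * fbr D s (d+1)) * (fbr D t (d+1) * fbr D t j) := by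
        rw [h1, h2]
  _ = fbr D s k * ((fbr D s (d+1) * fbr D t (d+1)) * fbr D t j) := by simp only [mul_assoc]
  _ = 0 := by rw [hsib, zero_mul, mul_zero]



lemma coeff_unique {e : A} (he : e ≠ 0) {c c' : ℂ} (h : c • e = c' • e) : c = c' := by
  by_contra hne
  apply he
  have h2 : (c - c') • e = 0 := by rw [sub_smul, h, sub_self]
  have h3 := congrArg (fun z => (c - c')⁻¹ • z) h2
  simpa [smul_smul, inv_mul_cancel₀ (sub_ne_zero.mpr hne)] using h3

lemma proj_norm_one {e : A} (hee : e * e = e) (hes : star e = e) (he0 : e ≠ 0) : ‖e‖ = 1 := by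
  have h := CStarRing.norm_star_mul_self (x := e)
  rw [hes, hee] at h
  have hn : ‖e‖ ≠ 0 := norm_ne_zero_iff.mpr he0
  have h2 : ‖e‖ * 1 = ‖e‖ * ‖e‖ := by rw [mul_one, ← h]
  exact (mul_left_cancel₀ hn h2).symm

/-- The coefficient functional extended by Hahn-Banach. -/
lemma exists_level_phi (B : NonUnitalStarSubalgebra ℂ A) {e : A}
    (hee : e * e = e) (hes : star e = e) (he0 : e ≠ 0)
    (hmin : ∀ a ∈ B, ∃ c : ℂ, e * a * e = c • e) :
    ∃ φ : StrongDual ℂ A, ‖φ‖ ≤ 1 ∧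
      ∀ a ∈ B, ∀ c : ℂ, e * a * e = c • e → φ a = c := by
  classical
  set V : Submodule ℂ A := B.toNonUnitalSubalgebra.toSubmodule with hV
  have hVmem : ∀ x : A, x ∈ V ↔ x ∈ B := fun x => Iff.rfl
  have hne : ‖e‖ = 1 := proj_norm_one hee hes he0
  set ω : V →ₗ[ℂ] ℂ :=
    { toFun := fun a => (hmin a.1 ((hVmem a.1).mp a.2)).choose
      map_add' := by
        intro a b
        have ha := (hmin a.1 ((hVmem a.1).mp a.2)).choose_spec
        have hb := (hmin b.1 ((hVmem b.1).mp b.2)).choose_spec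
        have hab := (hmin (a + b).1 ((hVmem (a+b).1).mp (a+b).2)).choose_spec
        apply coeff_unique he0
        rw [← hab]
        have : ((a + b : V) : A) = (a : A) + (b : A) := rfl
        rw [this, mul_add, add_mul, add_smul]; exact congrArg₂ (· + ·) ha hb
      map_smul' := by
        intro c a
        have ha := (hmin a.1 ((hVmem a.1).mp a.2)).choose_spec
        have hca := (hmin (c • a).1 ((hVmem (c • a).1).mp (c • a).2)).choose_spec
        apply coeff_unique he0
        rw [← hca]
        have : ((c • a : V) : A) = c • (a : A) := rfl
        rw [this, mul_smul_comm, smul_mul_assoc]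
        refine (congrArg (c • ·) ha).trans ?_
        rw [smul_smul]
        simp } with hω
  have hbound : ∀ a : V, ‖ω a‖ ≤ 1 * ‖a‖ := by
    intro a
    have ha := (hmin a.1 ((hVmem a.1).mp a.2)).choose_spec
    have h1 : ‖ω a • e‖ = ‖(ω a : ℂ)‖ * ‖e‖ := norm_smul _ _
    have h2 : (ω a : ℂ) • e = e * a.1 * e := ha.symm
    have h3 : ‖e * a.1 * e‖ ≤ ‖e‖ * ‖a.1‖ * ‖e‖ :=
      le_trans (norm_mul_le _ _) (by
        have := norm_mul_le e a.1
        nlinarith [norm_nonneg (e : A), norm_nonneg (e * a.1), norm_nonneg a.1])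
    have h5 : ‖(ω a : ℂ)‖ = ‖e * a.1 * e‖ := by rw [← h2, h1, hne, mul_one]
    rw [hne] at h3
    rw [one_mul]
    have : ‖ω a‖ ≤ ‖a.1‖ := by rw [h5]; nlinarith [norm_nonneg (a.1 : A)]
    exact this
  set ωc : V →L[ℂ] ℂ := ω.mkContinuous 1 hbound with hωc
  obtain ⟨φ, hext, hnorm⟩ := exists_extension_norm_eq V ωc
  refine ⟨φ, ?_, ?_⟩
  · rw [hnorm]
    exact ω.mkContinuous_norm_le (by norm_num) hbound
  · intro a haB c hc
    have h1 : φ a = ωc ⟨a, (hVmem a).mpr haB⟩ := hext ⟨a, (hVmem a).mpr haB⟩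
    have h2 : ωc ⟨a, (hVmem a).mpr haB⟩ = (hmin a haB).choose := rfl
    rw [h1, h2]
    exact coeff_unique he0 ((((hmin a haB).choose_spec).symm.trans hc))


/-- cluster-point extraction -/
lemma exists_cluster_phi (T : ℕ → StrongDual ℂ A) (hT : ∀ k, ‖T k‖ ≤ 1) :
    ∃ φ : StrongDual ℂ A, ‖φ‖ ≤ 1 ∧
      ∀ (b : A) (c : ℂ), (∀ᶠ k in atTop, T k b = c) → φ b = c := by
  classical
  set T' : ℕ → WeakDual ℂ A := fun k => StrongDual.toWeakDual (T k) with hT'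
  set K : Set (WeakDual ℂ A) := WeakDual.toStrongDual ⁻¹' Metric.closedBall 0 1 with hK
  have hcomp : IsCompact K := WeakDual.isCompact_closedBall (𝕜 := ℂ) (E := A) 0 1
  have hmemK : ∀ k, T' k ∈ K := by
    intro k
    simp only [hK, Set.mem_preimage, Metric.mem_closedBall, dist_zero_right]
    exact hT k
  have hle : Filter.map T' atTop ≤ Filter.principal K :=
    le_principal_iff.mpr (Filter.mem_map.mpr (Filter.Eventually.of_forall hmemK))
  obtain ⟨ψ, hψK, hclus⟩ := hcomp.exists_clusterPt hle
  refine ⟨WeakDual.toStrongDual ψ, ?_, ?_⟩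
  · have := hψK
    simpa only [hK, Set.mem_preimage, Metric.mem_closedBall, dist_zero_right] using this
  · intro b c hev
    have h1 : ClusterPt (ψ b) (Filter.map (fun w : WeakDual ℂ A => w b) (Filter.map T' atTop)) :=
      hclus.map (WeakDual.eval_continuous b).continuousAt Filter.tendsto_map
    rw [Filter.map_map] at h1
    have h2 : Filter.map (fun k => T' k b) atTop ≤ Filter.principal ({c} : Set ℂ) := by
      apply le_principal_iff.mpr
      apply Filter.mem_map.mpr
      filter_upwards [hev] with k hk
      exact hk
    have h3 : ClusterPt (ψ b) (Filter.principal ({c} : Set ℂ)) := h1.mono h2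
    have h4 : ψ b ∈ closure ({c} : Set ℂ) := mem_closure_iff_clusterPt.mpr h3
    rw [closure_singleton] at h4
    exact h4



noncomputable def levelPhi (D : FData A) (s : ℕ → Bool) (k : ℕ) : StrongDual ℂ A :=
  (exists_level_phi (D.S (D.n k)) (chooseEQR_spec (inv_fbr D s k)).1.2.1
    (chooseEQR_spec (inv_fbr D s k)).1.2.2.1 (chooseEQR_spec (inv_fbr D s k)).1.2.2.2.1
    (chooseEQR_spec (inv_fbr D s k)).1.2.2.2.2.2.2).choose

lemma levelPhi_prop (D : FData A) (s : ℕ → Bool) (k : ℕ) :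
    ‖levelPhi D s k‖ ≤ 1 ∧
      ∀ a ∈ D.S (D.n k), ∀ c : ℂ,
        (chooseEQR D k (fbr D s k)).1 * a * (chooseEQR D k (fbr D s k)).1
          = c • (chooseEQR D k (fbr D s k)).1 → levelPhi D s k a = c :=
  (exists_level_phi (D.S (D.n k)) (chooseEQR_spec (inv_fbr D s k)).1.2.1
    (chooseEQR_spec (inv_fbr D s k)).1.2.2.1 (chooseEQR_spec (inv_fbr D s k)).1.2.2.2.1
    (chooseEQR_spec (inv_fbr D s k)).1.2.2.2.2.2.2).choose_spec

lemma emin_fbr_le (D : FData A) (s : ℕ → Bool) {j k : ℕ} (hjk : j ≤ k) :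
    (chooseEQR D k (fbr D s k)).1 * fbr D s j = (chooseEQR D k (fbr D s k)).1 := by
  have hs := chooseEQR_spec (inv_fbr D s k)
  have hef : (chooseEQR D k (fbr D s k)).1 * fbr D s k = (chooseEQR D k (fbr D s k)).1 :=
    hs.1.2.2.2.2.1
  calc (chooseEQR D k (fbr D s k)).1 * fbr D s j
      = ((chooseEQR D k (fbr D s k)).1 * fbr D s k) * fbr D s j := by rw [hef]
  _ = (chooseEQR D k (fbr D s k)).1 * (fbr D s k * fbr D s j) := by rw [mul_assoc]
  _ = (chooseEQR D k (fbr D s k)).1 := by rw [(fbr_chain D s k j hjk).1, hef]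

lemma levelPhi_one (D : FData A) (s : ℕ → Bool) {j k : ℕ} (hjk : j ≤ k) :
    levelPhi D s k (fbr D s j) = 1 := by
  have hmem : fbr D s j ∈ D.S (D.n k) :=
    D.mono (D.hn.monotone hjk) (inv_fbr D s j).1
  apply (levelPhi_prop D s k).2 _ hmem
  set e := (chooseEQR D k (fbr D s k)).1 with he
  have hee : e * e = e := (chooseEQR_spec (inv_fbr D s k)).1.2.1
  rw [emin_fbr_le D s hjk, hee, one_smul]

lemma levelPhi_zero (D : FData A) {s t : ℕ → Bool} {d : ℕ}
    (hagree : ∀ i < d, s i = t i) (hd : s d ≠ t d) {j k : ℕ} (hdj : d < j) (hjk : j ≤ k) :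
    levelPhi D s k (fbr D t j) = 0 := by
  have hmem : fbr D t j ∈ D.S (D.n k) :=
    D.mono (D.hn.monotone hjk) (inv_fbr D t j).1
  apply (levelPhi_prop D s k).2 _ hmem
  set e := (chooseEQR D k (fbr D s k)).1 with he
  have hef : e * fbr D s k = e := (chooseEQR_spec (inv_fbr D s k)).1.2.2.2.2.1
  have horth : fbr D s k * fbr D t j = 0 := fbr_orth D hagree hd k j (lt_of_lt_of_le hdj hjk) hdj
  have h1 : e * fbr D t j = 0 := by
    calc e * fbr D t j = (e * fbr D s k) * fbr D t j := by rw [hef]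
    _ = e * (fbr D s k * fbr D t j) := by rw [mul_assoc]
    _ = 0 := by rw [horth, mul_zero]
  rw [h1, zero_mul, zero_smul]

lemma exists_branch_phi (D : FData A) (s : ℕ → Bool) :
    ∃ φ : StrongDual ℂ A, ‖φ‖ ≤ 1 ∧ (∀ j, φ (fbr D s j) = 1) ∧
      (∀ t d, (∀ i < d, s i = t i) → s d ≠ t d → ∀ j, d < j → φ (fbr D t j) = 0) := by
  obtain ⟨φ, hφn, hφval⟩ := exists_cluster_phi (levelPhi D s) (fun k => (levelPhi_prop D s k).1)
  refine ⟨φ, hφn, ?_, ?_⟩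
  · intro j
    apply hφval
    exact Filter.eventually_atTop.mpr ⟨j, fun k hk => levelPhi_one D s hk⟩
  · intro t d hagree hd j hdj
    apply hφval
    exact Filter.eventually_atTop.mpr ⟨j, fun k hk => levelPhi_zero D hagree hd hdj hk⟩

end FermionAux

open FermionAux in
theorem fermion_presentation_dual_not_separable
    (A : Type*) [NonUnitalCStarAlgebra A]
    (hA : ∃ SA : ℕ → NonUnitalStarSubalgebra ℂ A,
      IsAFPresentation A SA ∧ HasFermionProperty A SA) :
    ¬ TopologicalSpace.SeparableSpace (StrongDual ℂ A) := by
  classical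
  obtain ⟨SA, ⟨hmono, hfd, _hdense⟩, nn, pp, hn, hpmem, hpproj, hpne, hcentral, _hminc, hferm⟩ := hA
  set D : FData A :=
    { S := SA, n := nn, p := pp, mono := hmono, fd := hfd, hn := hn,
      hpmem := hpmem, hpp := fun k => (hpproj k).1, hps := fun k => (hpproj k).2,
      hpne := hpne, hcentral := hcentral, hferm := hferm } with hD
  intro hsep
  obtain ⟨Dset, hDc, hDd⟩ := TopologicalSpace.exists_countable_dense (StrongDual ℂ A)
  set Φ : (ℕ → Bool) → StrongDual ℂ A := fun s => (exists_branch_phi D s).choose with hΦ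
  have hΦspec := fun s => (exists_branch_phi D s).choose_spec
  -- pairwise separation
  have hsep2 : ∀ s t : ℕ → Bool, s ≠ t → 1 ≤ dist (Φ s) (Φ t) := by
    intro s t hst
    have hex : ∃ j, s j ≠ t j := by
      by_contra h
      push_neg at h
      exact hst (funext h)
    set d := Nat.find hex with hdd
    have hd : s d ≠ t d := Nat.find_spec hex
    have hagree : ∀ i < d, s i = t i := by
      intro i hi
      have := Nat.find_min hex hi
      simpa using this
    set v : A := fbr D s (d+1) with hv
    have hv1 : Φ s v = 1 := (hΦspec s).2.1 (d+1)
    have hv0 : Φ t v = 0 :=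
      (hΦspec t).2.2 s d (fun i hi => (hagree i hi).symm) (fun h => hd h.symm)
        (d+1) (Nat.lt_succ_self d)
    have hvinv := inv_fbr D s (d+1)
    have hvnorm : ‖v‖ = 1 := proj_norm_one hvinv.2.1 hvinv.2.2.1 hvinv.2.2.2.1
    have h1 : (Φ s - Φ t) v = 1 := by
      rw [ContinuousLinearMap.sub_apply, hv1, hv0, sub_zero]
    calc (1:ℝ) = ‖(Φ s - Φ t) v‖ := by rw [h1]; simp
    _ ≤ ‖Φ s - Φ t‖ * ‖v‖ := (Φ s - Φ t).le_opNorm v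
    _ = dist (Φ s) (Φ t) := by rw [hvnorm, mul_one, dist_eq_norm]
  -- choose nearby points in the countable dense set
  have hchoice : ∀ s : ℕ → Bool, ∃ y ∈ Dset, dist (Φ s) y < 1/2 := fun s =>
    Metric.mem_closure_iff.mp (hDd (Φ s)) (1/2) (by norm_num)
  choose ds hdmem hddist using hchoice
  haveI : Countable ↥Dset := hDc.to_subtype
  have hinj : Function.Injective (fun s : ℕ → Bool => (⟨ds s, hdmem s⟩ : ↥Dset)) := by
    intro s t h
    by_contra hne
    have h1 := hsep2 s t hne
    have heq : ds s = ds t := congrArg Subtype.val h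
    have h2 : dist (Φ s) (Φ t) ≤ dist (Φ s) (ds s) + dist (ds s) (Φ t) := dist_triangle _ _ _
    have h4 : dist (ds s) (Φ t) = dist (Φ t) (ds t) := by rw [dist_comm, heq]
    linarith [hddist s, hddist t]
  haveI hcount : Countable (ℕ → Bool) := hinj.countable
  -- Cantor: Set ℕ injects into ℕ → Bool, hence into ℕ; contradiction
  have hcantor : Function.Injective (fun (X : Set ℕ) => (fun m => decide (m ∈ X) : ℕ → Bool)) := by
    intro X Y h
    ext m
    have := congrFun h m
    simpa using this
  haveI : Countable (Set ℕ) := hcantor.countable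
  obtain ⟨f2, hf2⟩ := exists_injective_nat (Set ℕ)
  exact Function.cantor_injective f2 hf2
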